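/- Let X be a real Hilbert space, U : X → ℝ ∪ {+∞} proper convex lower semicontinuous, and let x be a point where the subdifferential ∂U(x) is nonempty. Denote by D₀U(x) the element of minimal norm in ∂U(x), and by DU_α(x) the gradient of the Moreau–Yosida approximation U_α at x. Then ‖DU_α(x) − D₀U(x)‖² ≤ ‖D₀U(x)‖² − ‖DU_α(x)‖². -/

import Mathlib

open scoped RealInnerProductSpace
open Filter Set Topology

/-!
The envelope `Uα` is convex, so its gradient `g` at `x` gives, by testing the gradient inequality
at `z + α g`, the affine minorant `Uα x + α‖g‖²/2 + ⟪g, · - x⟫` of `U`. Its convex combinations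
with the subgradient minorant `U x + ⟪ξ₀, · - x⟫` are again minorants of `U`, and an affine
minorant of slope `v` bounds `Uα x` from below by its value at `x` minus `α‖v‖²/2`. Since the
constant term of the first minorant is at most `U x`, this yields `‖g‖ ≤ ‖g + t (ξ₀ - g)‖` for
`t ∈ [0, 1]`, hence `⟪g, ξ₀ - g⟫ ≥ 0`, which is the claimed inequality.
-/

theorem ConvexOn.add_inner_le_of_hasGradientAt {X : Type*} [NormedAddCommGroup X]
    [InnerProductSpace ℝ X] [CompleteSpace X] {f : X → ℝ}
    (hf : ConvexOn ℝ univ f) {x g : X} (hg : HasGradientAt f g x) (w : X) :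
    f x + ⟪g, w - x⟫ ≤ f w := by
  let L : ℝ →ᵃ[ℝ] X := AffineMap.lineMap x w
  have hline : ConvexOn ℝ univ (f ∘ L) := hf.comp_affineMap L
  have hderiv : HasDerivAt (f ∘ L) ⟪g, w - x⟫ 0 := by
    have hfL : HasFDerivAt f (InnerProductSpace.toDual ℝ X g) (L 0) := by
      simpa [L] using hg.hasFDerivAt
    simpa using hfL.comp_hasDerivAt (0 : ℝ) AffineMap.hasDerivAt_lineMap
  have := hline.le_slope_of_hasDerivAt (mem_univ 0) (mem_univ 1) zero_lt_one hderiv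
  simp [slope_def_field, L] at this
  linarith

theorem real_inner_nonneg_of_forall_norm_sq_le {X : Type*} [NormedAddCommGroup X]
    [InnerProductSpace ℝ X] {g d : X}
    (h : ∀ t ∈ Ioc (0 : ℝ) 1, ‖g‖ ^ 2 ≤ ‖g + t • d‖ ^ 2) : 0 ≤ ⟪g, d⟫ := by
  have hlim : Tendsto (fun t : ℝ => 2 * ⟪g, d⟫ + t * ‖d‖ ^ 2) (𝓝[>] 0) (𝓝 (2 * ⟪g, d⟫)) := by
    have : Continuous (fun t : ℝ => 2 * ⟪g, d⟫ + t * ‖d‖ ^ 2) := by fun_prop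
    simpa using (this.tendsto 0).mono_left nhdsWithin_le_nhds
  have hev : ∀ᶠ t in 𝓝[>] (0 : ℝ), 0 ≤ 2 * ⟪g, d⟫ + t * ‖d‖ ^ 2 := by
    filter_upwards [Ioc_mem_nhdsGT zero_lt_one] with t ht
    have hexp := h t ht
    rw [norm_add_sq_real, real_inner_smul_right, norm_smul, Real.norm_of_nonneg ht.1.le,
      mul_pow] at hexp
    exact nonneg_of_mul_nonneg_right (by nlinarith) ht.1
  linarith [ge_of_tendsto hlim hev]

def IsMoreauEnvelope {X : Type*} [NormedAddCommGroup X] (U : X → EReal) (α : ℝ) (Uα : X → ℝ) :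
    Prop :=
  ∀ w, ((Uα w : ℝ) : EReal) = ⨅ y : X, U y + ((‖w - y‖ ^ 2 / (2 * α) : ℝ) : EReal)

namespace IsMoreauEnvelope

variable {X : Type*} [NormedAddCommGroup X] {U : X → EReal} {α : ℝ} {Uα : X → ℝ}

theorem le (h : IsMoreauEnvelope U α Uα) (w y : X) :
    (Uα w : EReal) ≤ U y + ((‖w - y‖ ^ 2 / (2 * α) : ℝ) : EReal) :=
  h w ▸ iInf_le _ y

theorem ne_bot (h : IsMoreauEnvelope U α Uα) (y : X) : U y ≠ ⊥ := fun hy => by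
  simpa [hy] using h.le y y

theorem exists_lt (h : IsMoreauEnvelope U α Uα) (w : X) {ε : ℝ} (hε : 0 < ε) :
    ∃ y, ∃ u : ℝ, U y = u ∧ u + ‖w - y‖ ^ 2 / (2 * α) < Uα w + ε := by
  have hlt : ⨅ y : X, U y + ((‖w - y‖ ^ 2 / (2 * α) : ℝ) : EReal) < ((Uα w + ε : ℝ) : EReal) := by
    rw [← h w]
    exact_mod_cast lt_add_of_pos_right _ hε
  obtain ⟨y, hy⟩ := iInf_lt_iff.mp hlt
  have htop : U y ≠ ⊤ := fun hU => by simp [hU] at hy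
  have hU := (EReal.coe_toReal htop (h.ne_bot y)).symm
  rw [hU, ← EReal.coe_add, EReal.coe_lt_coe_iff] at hy
  exact ⟨y, _, hU, hy⟩

variable [InnerProductSpace ℝ X]

theorem ne_top_of_forall_le (h : IsMoreauEnvelope U α Uα) {x ξ : X}
    (hξ : ∀ z, U x + ((⟪ξ, z - x⟫ : ℝ) : EReal) ≤ U z) : U x ≠ ⊤ := fun hx => by
  have htop : ∀ z, U z = ⊤ := fun z => top_le_iff.mp (by simpa [hx] using hξ z)
  simpa [htop] using h x

theorem convexOn (h : IsMoreauEnvelope U α Uα) (hα : 0 ≤ α)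
    (hconv : ∀ x y : X, ∀ t : ℝ, 0 ≤ t → t ≤ 1 →
      U (t • x + (1 - t) • y) ≤ ((t : ℝ) : EReal) * U x + (((1 - t : ℝ)) : EReal) * U y) :
    ConvexOn ℝ univ Uα := by
  refine ⟨convex_univ, fun a _ b _ s t hs ht hst => ?_⟩
  obtain rfl : t = 1 - s := by linarith
  refine le_of_forall_pos_le_add fun ε hε => ?_
  obtain ⟨y₁, u₁, hu₁, hy₁⟩ := h.exists_lt a hε
  obtain ⟨y₂, u₂, hu₂, hy₂⟩ := h.exists_lt b hε
  have hU : U (s • y₁ + (1 - s) • y₂) ≤ ((s * u₁ + (1 - s) * u₂ : ℝ) : EReal) := by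
    simpa [hu₁, hu₂, EReal.coe_mul, EReal.coe_add] using hconv y₁ y₂ s hs (by linarith)
  have hq : ‖(s • a + (1 - s) • b) - (s • y₁ + (1 - s) • y₂)‖ ^ 2
      ≤ s * ‖a - y₁‖ ^ 2 + (1 - s) * ‖b - y₂‖ ^ 2 := by
    have := (convexOn_univ_norm.pow (fun _ _ => norm_nonneg _) 2).2 (mem_univ (a - y₁))
      (mem_univ (b - y₂)) hs ht hst
    have e : (s • a + (1 - s) • b) - (s • y₁ + (1 - s) • y₂)
        = s • (a - y₁) + (1 - s) • (b - y₂) := by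
      module
    simpa [e] using this
  have hUα : Uα (s • a + (1 - s) • b) ≤ s * u₁ + (1 - s) * u₂
      + ‖(s • a + (1 - s) • b) - (s • y₁ + (1 - s) • y₂)‖ ^ 2 / (2 * α) := by
    exact_mod_cast (h.le _ _).trans (add_le_add hU le_rfl)
  calc Uα (s • a + (1 - s) • b)
      ≤ s * (u₁ + ‖a - y₁‖ ^ 2 / (2 * α)) + (1 - s) * (u₂ + ‖b - y₂‖ ^ 2 / (2 * α)) := by
        have := div_le_div_of_nonneg_right hq (by positivity : (0 : ℝ) ≤ 2 * α)
        rw [add_div, mul_div_assoc, mul_div_assoc] at this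
        linarith
    _ ≤ s * (Uα a + ε) + (1 - s) * (Uα b + ε) := by gcongr
    _ = s • Uα a + (1 - s) • Uα b + ε := by simp only [smul_eq_mul]; ring

theorem le_of_affine_le (h : IsMoreauEnvelope U α Uα) (hα : 0 < α) {x v : X} {β : ℝ}
    (hβ : ∀ y, ((β + ⟪v, y - x⟫ : ℝ) : EReal) ≤ U y) : β - α * ‖v‖ ^ 2 / 2 ≤ Uα x := by
  suffices ((β - α * ‖v‖ ^ 2 / 2 : ℝ) : EReal) ≤ Uα x by exact_mod_cast this
  rw [h x]
  refine le_iInf fun y => le_trans ?_ (add_le_add (hβ y) le_rfl)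
  rw [← EReal.coe_add, EReal.coe_le_coe_iff, norm_sub_rev]
  -- Completing the square: `0 ≤ ‖(y - x) + α v‖²`.
  have hsq := norm_add_sq_real (y - x) (α • v)
  rw [real_inner_smul_right, norm_smul, Real.norm_of_nonneg hα.le, real_inner_comm] at hsq
  have : 0 ≤ ‖y - x + α • v‖ ^ 2 / (2 * α) := by positivity
  rw [hsq] at this
  field_simp at this ⊢
  nlinarith

theorem affine_le_of_hasGradientAt [CompleteSpace X] (h : IsMoreauEnvelope U α Uα) (hα : 0 < α)
    (hconv : ∀ x y : X, ∀ t : ℝ, 0 ≤ t → t ≤ 1 →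
      U (t • x + (1 - t) • y) ≤ ((t : ℝ) : EReal) * U x + (((1 - t : ℝ)) : EReal) * U y)
    {x g : X} (hg : HasGradientAt Uα g x) (z : X) :
    ((Uα x + α * ‖g‖ ^ 2 / 2 + ⟪g, z - x⟫ : ℝ) : EReal) ≤ U z := by
  have hgrad := (h.convexOn hα.le hconv).add_inner_le_of_hasGradientAt hg (z + α • g)
  have hquad : ‖z + α • g - z‖ ^ 2 / (2 * α) = α * ‖g‖ ^ 2 / 2 := by
    rw [add_sub_cancel_left, norm_smul, Real.norm_of_nonneg hα.le]
    field_simp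
  have hinner : ⟪g, z + α • g - x⟫ = ⟪g, z - x⟫ + α * ‖g‖ ^ 2 := by
    rw [add_sub_right_comm, inner_add_right, real_inner_smul_right, real_inner_self_eq_norm_sq]
  rw [← (EReal.addLECancellable_coe (α * ‖g‖ ^ 2 / 2)).add_le_add_iff_right]
  calc ((Uα x + α * ‖g‖ ^ 2 / 2 + ⟪g, z - x⟫ : ℝ) : EReal) + ((α * ‖g‖ ^ 2 / 2 : ℝ) : EReal)
      = ((Uα x + ⟪g, z + α • g - x⟫ : ℝ) : EReal) := by
        rw [← EReal.coe_add, hinner]; ring_nf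
    _ ≤ Uα (z + α • g) := by exact_mod_cast hgrad
    _ ≤ U z + ((α * ‖g‖ ^ 2 / 2 : ℝ) : EReal) := hquad ▸ h.le _ _

theorem norm_sq_le_norm_add_smul_sq (h : IsMoreauEnvelope U α Uα) (hα : 0 < α) {x ξ g : X}
    {c : ℝ} (hc : U x ≤ c) (hξ : ∀ z, ((c + ⟪ξ, z - x⟫ : ℝ) : EReal) ≤ U z)
    (hg : ∀ z, ((Uα x + α * ‖g‖ ^ 2 / 2 + ⟪g, z - x⟫ : ℝ) : EReal) ≤ U z)
    {t : ℝ} (ht₀ : 0 ≤ t) (ht₁ : t ≤ 1) : ‖g‖ ^ 2 ≤ ‖g + t • (ξ - g)‖ ^ 2 := by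
  set b := Uα x + α * ‖g‖ ^ 2 / 2 with hb
  have hbc : b ≤ c := by exact_mod_cast (by simpa using hg x : (b : EReal) ≤ U x).trans hc
  have hcomb : ∀ y, ((t * c + (1 - t) * b + ⟪g + t • (ξ - g), y - x⟫ : ℝ) : EReal) ≤ U y := by
    intro y
    have e : t * c + (1 - t) * b + ⟪g + t • (ξ - g), y - x⟫
        = t * (c + ⟪ξ, y - x⟫) + (1 - t) * (b + ⟪g, y - x⟫) := by
      simp only [inner_add_left, real_inner_smul_left, inner_sub_left]
      ring
    rw [e]
    rcases le_total (c + ⟪ξ, y - x⟫) (b + ⟪g, y - x⟫) with hle | hle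
    · exact le_trans (by exact_mod_cast (by nlinarith)) (hg y)
    · exact le_trans (by exact_mod_cast (by nlinarith)) (hξ y)
  have := h.le_of_affine_le hα hcomb
  have hαle : α * ‖g‖ ^ 2 ≤ α * ‖g + t • (ξ - g)‖ ^ 2 := by
    nlinarith [mul_nonneg ht₀ (sub_nonneg.2 hbc)]
  exact le_of_mul_le_mul_left hαle hα

end IsMoreauEnvelope

theorem stmt2_general {X : Type*} [NormedAddCommGroup X] [InnerProductSpace ℝ X] [CompleteSpace X]
    (U : X → EReal)
    (hconv : ∀ x y : X, ∀ t : ℝ, 0 ≤ t → t ≤ 1 →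
      U (t • x + (1 - t) • y) ≤ ((t : ℝ) : EReal) * U x + (((1 - t : ℝ)) : EReal) * U y)
    (x : X) (ξ₀ : X)
    (hξ₀ : ∀ z : X, U x + ((⟪ξ₀, z - x⟫ : ℝ) : EReal) ≤ U z)
    (α : ℝ) (hα : 0 < α) (Uα : X → ℝ)
    (hUα : ∀ w, ((Uα w : ℝ) : EReal)
      = ⨅ y : X, U y + ((‖w - y‖ ^ 2 / (2 * α) : ℝ) : EReal))
    (g : X) (hg : HasGradientAt Uα g x) :
    ‖g - ξ₀‖ ^ 2 ≤ ‖ξ₀‖ ^ 2 - ‖g‖ ^ 2 := by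
  have hM : IsMoreauEnvelope U α Uα := hUα
  have hUx : U x = (U x).toReal :=
    (EReal.coe_toReal (hM.ne_top_of_forall_le hξ₀) (hM.ne_bot x)).symm
  have hξ : ∀ z, (((U x).toReal + ⟪ξ₀, z - x⟫ : ℝ) : EReal) ≤ U z := fun z => by
    rw [EReal.coe_add, ← hUx]
    exact hξ₀ z
  have hinner : 0 ≤ ⟪g, ξ₀ - g⟫ := real_inner_nonneg_of_forall_norm_sq_le fun t ht =>
    hM.norm_sq_le_norm_add_smul_sq hα hUx.le hξ (hM.affine_le_of_hasGradientAt hα hconv hg)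
      ht.1.le ht.2
  rw [inner_sub_right, real_inner_self_eq_norm_sq] at hinner
  rw [norm_sub_sq_real]
  linarith

/-- Estimate comparing the gradient of the Moreau–Yosida approximation with the
minimal-norm element of the subdifferential. -/
theorem stmt2 {X : Type*} [NormedAddCommGroup X] [InnerProductSpace ℝ X] [CompleteSpace X]
    (U : X → EReal)
    (hconv : ∀ x y : X, ∀ t : ℝ, 0 ≤ t → t ≤ 1 →
      U (t • x + (1 - t) • y) ≤ ((t : ℝ) : EReal) * U x + (((1 - t : ℝ)) : EReal) * U y)
    (hlsc : LowerSemicontinuous U)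
    (hproper : ∃ z, U z ≠ ⊤)
    (x : X) (ξ₀ : X)
    (hξ₀ : ∀ z : X, U x + ((⟪ξ₀, z - x⟫ : ℝ) : EReal) ≤ U z)
    (hmin : ∀ ξ : X, (∀ z : X, U x + ((⟪ξ, z - x⟫ : ℝ) : EReal) ≤ U z) → ‖ξ₀‖ ≤ ‖ξ‖)
    (α : ℝ) (hα : 0 < α) (Uα : X → ℝ)
    (hUα : ∀ w, ((Uα w : ℝ) : EReal)
      = ⨅ y : X, U y + ((‖w - y‖ ^ 2 / (2 * α) : ℝ) : EReal))
    (g : X) (hg : HasGradientAt Uα g x) :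
    ‖g - ξ₀‖ ^ 2 ≤ ‖ξ₀‖ ^ 2 - ‖g‖ ^ 2 :=
  stmt2_general U hconv x ξ₀ hξ₀ α hα Uα hUα g hg
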